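/- If two nested programs P and Q have the same SE-models, then P and Q are equivalent (have the same answer sets). -/

import Mathlib

open scoped Classical

inductive Lit where
  | pos : ℕ → Lit
  | neg : ℕ → Lit
deriving DecidableEq

inductive Fml where
  | bot : Fml
  | top : Fml
  | lit : Lit → Fml
  | not : Fml → Fml
  | conj : Fml → Fml → Fml
  | disj : Fml → Fml → Fml
deriving DecidableEq

structure Rule where
  head : Fml
  body : Fml
deriving DecidableEq

abbrev Prog := Set Rule

/-- A set of literals is consistent if it contains no complementary pair. -/
def Consistent (X : Set Lit) : Prop :=
  ∀ a : ℕ, ¬ (Lit.pos a ∈ X ∧ Lit.neg a ∈ X)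

def Sat (X : Set Lit) : Fml → Prop
  | Fml.bot => False
  | Fml.top => True
  | Fml.lit l => l ∈ X
  | Fml.not F => ¬ Sat X F
  | Fml.conj F G => Sat X F ∧ Sat X G
  | Fml.disj F G => Sat X F ∨ Sat X G

def SatRule (X : Set Lit) (r : Rule) : Prop := Sat X r.body → Sat X r.head

def SatProg (X : Set Lit) (P : Prog) : Prop := ∀ r ∈ P, SatRule X r

/-- The reduct of a formula relative to X. -/
noncomputable def Reduct (X : Set Lit) : Fml → Fml
  | Fml.bot => Fml.bot
  | Fml.top => Fml.top
  | Fml.lit l => Fml.lit l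
  | Fml.not F => if Sat X F then Fml.bot else Fml.top
  | Fml.conj F G => Fml.conj (Reduct X F) (Reduct X G)
  | Fml.disj F G => Fml.disj (Reduct X F) (Reduct X G)

noncomputable def ReductRule (X : Set Lit) (r : Rule) : Rule :=
  ⟨Reduct X r.head, Reduct X r.body⟩

noncomputable def ReductProg (X : Set Lit) (P : Prog) : Prog :=
  ReductRule X '' P

/-- Y is an answer set for P: Y is minimal among consistent sets satisfying the reduct of P w.r.t. Y. -/
def AnswerSet (Y : Set Lit) (P : Prog) : Prop :=
  Consistent Y ∧ SatProg Y (ReductProg Y P) ∧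
    ∀ Z : Set Lit, Consistent Z → SatProg Z (ReductProg Y P) → Z ⊆ Y → Z = Y

def SEModel (P : Prog) (X Y : Set Lit) : Prop :=
  Consistent X ∧ Consistent Y ∧ X ⊆ Y ∧ SatProg Y P ∧ SatProg X (ReductProg Y P)

def StrongEq (P Q : Prog) : Prop :=
  ∀ R : Prog, ∀ Y : Set Lit, AnswerSet Y (P ∪ R) ↔ AnswerSet Y (Q ∪ R)

def Fml.negFree : Fml → Prop
  | Fml.bot => True
  | Fml.top => True
  | Fml.lit l => ∃ a, l = Lit.pos a
  | Fml.not F => F.negFree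
  | Fml.conj F G => F.negFree ∧ G.negFree
  | Fml.disj F G => F.negFree ∧ G.negFree

def ProgNegFree (P : Prog) : Prop := ∀ r ∈ P, r.head.negFree ∧ r.body.negFree

/-- The set of atoms (positive literals) in a set of literals. -/
def PosLits (Z : Set Lit) : Set Lit := {l ∈ Z | ∃ a, l = Lit.pos a}

def AtomsOnly (Z : Set Lit) : Prop := ∀ l ∈ Z, ∃ a, l = Lit.pos a

theorem sat_reduct_iff (X : Set Lit) (F : Fml) : Sat X (Reduct X F) ↔ Sat X F := by
  induction F with
  | bot | top | lit => rfl
  | not F => by_cases hF : Sat X F <;> simp [Reduct, Sat, hF]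
  | conj F G ihF ihG | disj F G ihF ihG => simp only [Reduct, Sat, ihF, ihG]

theorem satRule_reductRule_iff (X : Set Lit) (r : Rule) :
    SatRule X (ReductRule X r) ↔ SatRule X r := by
  simp only [SatRule, ReductRule, sat_reduct_iff]

theorem satProg_reductProg_iff (X : Set Lit) (P : Prog) :
    SatProg X (ReductProg X P) ↔ SatProg X P := by
  simp only [SatProg, ReductProg, Set.forall_mem_image, satRule_reductRule_iff]

theorem answerSet_iff_seModel (Y : Set Lit) (P : Prog) :
    AnswerSet Y P ↔ SEModel P Y Y ∧ ∀ X, SEModel P X Y → X = Y := by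
  constructor
  · rintro ⟨hY, hYred, hmin⟩
    exact ⟨⟨hY, hY, subset_rfl, (satProg_reductProg_iff Y P).1 hYred, hYred⟩,
      fun X ⟨hX, _, hXY, _, hXred⟩ => hmin X hX hXred hXY⟩
  · rintro ⟨⟨hY, -, -, hYP, hYred⟩, hmin⟩
    exact ⟨hY, hYred, fun Z hZ hZred hZY => hmin Z ⟨hZ, hY, hZY, hYP, hZred⟩⟩

/-- Programs with the same SE-models are equivalent (same answer sets). -/
theorem stmt3 (P Q : Prog)
    (h : ∀ X Y : Set Lit, SEModel P X Y ↔ SEModel Q X Y) :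
    ∀ Y : Set Lit, AnswerSet Y P ↔ AnswerSet Y Q := by
  intro Y
  simp only [answerSet_iff_seModel, h]
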